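/- Let X be a proper geodesic metric space, D ≥ 0, let γ : [a,b] → X be a D-contracting geodesic, set δ = 7D + 1, and let σ be a subsegment of γ. Suppose z ∈ X satisfies π_{im γ}(z) ∩ im σ ≠ ∅, and let B be a closed metric ball centered at z that is disjoint from the image of σ. Then diam(π_{im σ}(B)) ≤ D + 4δ. -/

import Mathlib

/-! Geodesics, quasi-geodesics, projections, contracting and super-contracting
geodesics, and Morse geodesics in a metric space. -/

open Metric Set

section Defs

variable {X : Type*} [MetricSpace X]

/-- `γ` is a geodesic parametrized by `[a,b]`:
`dist (γ s) (γ t) = |s - t|` for all `s, t ∈ [a,b]`. -/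
def IsGeodesicOn (γ : ℝ → X) (a b : ℝ) : Prop :=
  ∀ s ∈ Icc a b, ∀ t ∈ Icc a b, dist (γ s) (γ t) = |s - t|

/-- `X` is a geodesic metric space: every two points are joined by a geodesic. -/
def GeodesicSpace (X : Type*) [MetricSpace X] : Prop :=
  ∀ x y : X, ∃ γ : ℝ → X, IsGeodesicOn γ 0 (dist x y) ∧ γ 0 = x ∧ γ (dist x y) = y

/-- `σ` is a `(lam, eps)`-quasi-geodesic parametrized by `[a,b]`. -/
def IsQuasiGeodesicOn (σ : ℝ → X) (a b lam eps : ℝ) : Prop :=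
  ∀ s ∈ Icc a b, ∀ t ∈ Icc a b,
    (1 / lam) * |s - t| - eps ≤ dist (σ s) (σ t) ∧
      dist (σ s) (σ t) ≤ lam * |s - t| + eps

/-- The projection `π_C(x)`: points of `C` realizing `infDist x C`. -/
def projPt (C : Set X) (x : X) : Set X :=
  {p ∈ C | dist x p = infDist x C}

/-- The map `γ` (with parameter interval `[a,b]`) is `D`-contracting: for any
closed ball `B` disjoint from the image of `γ`, the projection `π_{im γ}(B)`
has diameter at most `D`. -/
def ContractingOn (γ : ℝ → X) (a b D : ℝ) : Prop :=
  ∀ (z : X) (r : ℝ), Disjoint (closedBall z r) (γ '' Icc a b) →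
    ∀ x ∈ closedBall z r, ∀ y ∈ closedBall z r,
      ∀ p ∈ projPt (γ '' Icc a b) x, ∀ q ∈ projPt (γ '' Icc a b) y,
        dist p q ≤ D

/-- `γ` (with parameter interval `[a,b]`) is `D`-super-contracting: every
subsegment of `γ` is `D`-contracting. -/
def SuperContractingOn (γ : ℝ → X) (a b D : ℝ) : Prop :=
  ∀ s t : ℝ, a ≤ s → s ≤ t → t ≤ b → ContractingOn γ s t D

/-- `γ` (with parameter interval `[a,b]`) is `N`-Morse: every
`(lam, eps)`-quasi-geodesic with endpoints on the image of `γ` stays within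
distance `N lam eps` of the image of `γ`. -/
def MorseOn (γ : ℝ → X) (a b : ℝ) (N : ℝ → ℝ → ℝ) : Prop :=
  ∀ lam eps : ℝ, 1 ≤ lam → 0 ≤ eps →
    ∀ (σ : ℝ → X) (c d : ℝ), c ≤ d → IsQuasiGeodesicOn σ c d lam eps →
      σ c ∈ γ '' Icc a b → σ d ∈ γ '' Icc a b →
        ∀ s ∈ Icc c d, infDist (σ s) (γ '' Icc a b) ≤ N lam eps

end Defs

/-! If `w ∈ π_Γ(z)` lies on the subsegment `σ` and the ball `B` around `z` misses `σ`, then `B`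
also misses `Γ = im γ`, so contraction bounds `π_Γ(B)` together with `w` by `D`. For `x ∈ B`
and `p ∈ π_σ(x)` we get `d(x, p) ≤ d(x, w) ≤ d(x, Γ) + D`, so `p ∈ Γ` is a `D`-almost
projection of `x`. In a geodesic space an almost projection `q` of `x` is close to the true
projection: walk from `x` towards `q` until just before `Γ`; the ball of that radius around `x`
misses `Γ`, and contraction compares `π_Γ(x)` with the projection of the endpoint of the walk,
which is near `q`. This puts `π_σ(x)` within `3D` of `π_Γ(x)`, so `π_σ(B)` has diameter at
most `3D + D + 3D`. -/

section Contracting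

variable {X : Type*} [MetricSpace X]

/-- `ContractingOn γ a b D` unfolds to `IsContracting (γ '' Icc a b) D`. -/
def IsContracting (Γ : Set X) (D : ℝ) : Prop :=
  ∀ (z : X) (r : ℝ), Disjoint (closedBall z r) Γ →
    ∀ x ∈ closedBall z r, ∀ y ∈ closedBall z r,
      ∀ p ∈ projPt Γ x, ∀ q ∈ projPt Γ y, dist p q ≤ D

theorem IsGeodesicOn.lipschitzOnWith {γ : ℝ → X} {a b : ℝ} (hγ : IsGeodesicOn γ a b) :
    LipschitzOnWith 1 γ (Icc a b) :=
  LipschitzOnWith.of_dist_le_mul fun u hu v hv => by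
    rw [hγ u hu v hv, Real.dist_eq, NNReal.coe_one, one_mul]

theorem IsGeodesicOn.isCompact_image {γ : ℝ → X} {a b : ℝ} (hγ : IsGeodesicOn γ a b) :
    IsCompact (γ '' Icc a b) :=
  isCompact_Icc.image_of_continuousOn hγ.lipschitzOnWith.continuousOn

theorem IsCompact.projPt_nonempty {Γ : Set X} (hΓ : IsCompact Γ) (hne : Γ.Nonempty) (x : X) :
    (projPt Γ x).Nonempty :=
  let ⟨p, hp, hxp⟩ := hΓ.exists_infDist_eq_dist hne x
  ⟨p, hp, hxp.symm⟩

theorem GeodesicSpace.exists_dist_eq_of_le (hX : GeodesicSpace X) (x y : X) {τ : ℝ}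
    (h0 : 0 ≤ τ) (hτ : τ ≤ dist x y) : ∃ m, dist x m = τ ∧ dist m y = dist x y - τ := by
  obtain ⟨η, hη, hη0, hηy⟩ := hX x y
  have hτmem : τ ∈ Icc 0 (dist x y) := ⟨h0, hτ⟩
  refine ⟨η τ, ?_, ?_⟩
  · rw [← hη0, hη 0 ⟨le_rfl, dist_nonneg⟩ τ hτmem, abs_sub_comm, sub_zero, abs_of_nonneg h0]
  · rw [← hηy, hη τ hτmem _ ⟨dist_nonneg, le_rfl⟩, hηy, abs_sub_comm,
      abs_of_nonneg (sub_nonneg.mpr hτ)]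

theorem disjoint_closedBall_of_mem_projPt {Γ : Set X} {z w : X} {r : ℝ} (hw : w ∈ projPt Γ z)
    (hwr : w ∉ closedBall z r) : Disjoint (closedBall z r) Γ := by
  refine disjoint_left.mpr fun c hcr hcΓ => hwr ?_
  rw [mem_closedBall, dist_comm, hw.2]
  exact (infDist_le_dist_of_mem hcΓ).trans (mem_closedBall'.mp hcr)

theorem dist_le_infDist_add_of_mem_projPt {S Γ : Set X} {x p p' w : X} (hp : p ∈ projPt S x)
    (hw : w ∈ S) (hp' : p' ∈ projPt Γ x) : dist x p ≤ infDist x Γ + dist p' w := by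
  rw [hp.2, ← hp'.2]
  exact (infDist_le_dist_of_mem hw).trans (dist_triangle _ _ _)

variable {Γ : Set X} {D C : ℝ}

theorem IsContracting.dist_le_add_two_mul_add_of_infDist (hX : GeodesicSpace X)
    (hΓ : IsContracting Γ D) (hΓc : IsCompact Γ) {x p q : X} (hp : p ∈ projPt Γ x)
    (hq : q ∈ Γ) (hxq : dist x q ≤ infDist x Γ + C) {ε : ℝ} (hε : 0 < ε)
    (hεx : ε ≤ infDist x Γ) : dist p q ≤ D + 2 * C + 2 * ε := by
  set d := infDist x Γ
  have hdq : d ≤ dist x q := infDist_le_dist_of_mem hq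
  obtain ⟨m, hxm, hmq⟩ :=
    hX.exists_dist_eq_of_le x q (τ := d - ε) (by linarith) (by linarith)
  have hdisj : Disjoint (closedBall x (d - ε)) Γ := by
    refine disjoint_left.mpr fun c hcx hcΓ => ?_
    have := infDist_le_dist_of_mem (x := x) hcΓ
    linarith [mem_closedBall'.mp hcx]
  obtain ⟨q', hq'⟩ := hΓc.projPt_nonempty ⟨q, hq⟩ m
  have hpq' : dist p q' ≤ D :=
    hΓ x _ hdisj x (mem_closedBall_self (by linarith)) m (mem_closedBall'.mpr hxm.le) p hp q' hq'
  have hmq' : dist m q' ≤ dist m q := hq'.2 ▸ infDist_le_dist_of_mem hq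
  calc dist p q ≤ dist p q' + dist q' m + dist m q := dist_triangle4 _ _ _ _
    _ ≤ D + 2 * C + 2 * ε := by rw [dist_comm q' m]; linarith

theorem IsContracting.dist_le_add_two_mul_of_infDist (hX : GeodesicSpace X)
    (hΓ : IsContracting Γ D) (hΓc : IsCompact Γ) {x p q : X} (hx : x ∉ Γ)
    (hp : p ∈ projPt Γ x) (hq : q ∈ Γ) (hxq : dist x q ≤ infDist x Γ + C) :
    dist p q ≤ D + 2 * C := by
  have hd : 0 < infDist x Γ := (hΓc.isClosed.notMem_iff_infDist_pos ⟨q, hq⟩).mp hx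
  refine le_of_forall_pos_le_add fun ε hε => ?_
  have := hΓ.dist_le_add_two_mul_add_of_infDist hX hΓc hp hq hxq (ε := min (ε / 2) (infDist x Γ))
    (lt_min (half_pos hε) hd) (min_le_right _ _)
  linarith [min_le_left (ε / 2) (infDist x Γ)]

theorem IsContracting.dist_projPt_le_of_projPt_center_mem (hX : GeodesicSpace X)
    (hΓ : IsContracting Γ D) (hΓc : IsCompact Γ) {S : Set X} (hS : S ⊆ Γ) {z w : X} {r : ℝ}
    (hw : w ∈ projPt Γ z) (hwS : w ∈ S) (hdisj : Disjoint (closedBall z r) Γ) {x p p' : X}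
    (hx : x ∈ closedBall z r) (hp : p ∈ projPt S x) (hp' : p' ∈ projPt Γ x) :
    dist p' p ≤ 3 * D := by
  have hwp' : dist p' w ≤ D := by
    rw [dist_comm]
    exact hΓ z r hdisj z (mem_closedBall_self (dist_nonneg.trans hx)) x hx w hw p' hp'
  have hxp := dist_le_infDist_add_of_mem_projPt hp hwS hp'
  have := hΓ.dist_le_add_two_mul_of_infDist hX hΓc (disjoint_left.mp hdisj hx) hp' (hS hp.1)
    (C := D) (hxp.trans (by linarith))
  linarith

end Contracting

theorem proj_diam_of_meeting_subsegment_general {X : Type} [MetricSpace X]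
    (hgeo : GeodesicSpace X) (D : ℝ)
    (γ : ℝ → X) (a b : ℝ)
    (hγ : IsGeodesicOn γ a b) (hcon : ContractingOn γ a b D)
    (s t : ℝ) (has : a ≤ s) (htb : t ≤ b)
    (z : X) (hz : (projPt (γ '' Set.Icc a b) z ∩ γ '' Set.Icc s t).Nonempty)
    (r : ℝ) (hdisj : Disjoint (Metric.closedBall z r) (γ '' Set.Icc s t)) :
    ∀ x ∈ Metric.closedBall z r, ∀ y ∈ Metric.closedBall z r,
      ∀ p ∈ projPt (γ '' Set.Icc s t) x, ∀ q ∈ projPt (γ '' Set.Icc s t) y,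
        dist p q ≤ D + 4 * (7 * D + 1) := by
  intro x hx y hy p hp q hq
  obtain ⟨w, hw, hwσ⟩ := hz
  have hΓ : IsContracting (γ '' Icc a b) D := hcon
  have hΓc := hγ.isCompact_image
  have hσΓ : γ '' Icc s t ⊆ γ '' Icc a b := image_mono (Icc_subset_Icc has htb)
  have hdisjΓ := disjoint_closedBall_of_mem_projPt hw (disjoint_right.mp hdisj hwσ)
  obtain ⟨p', hp'⟩ := hΓc.projPt_nonempty ⟨w, hw.1⟩ x
  obtain ⟨q', hq'⟩ := hΓc.projPt_nonempty ⟨w, hw.1⟩ y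
  have hp'q' : dist p' q' ≤ D := hΓ z r hdisjΓ x hx y hy p' hp' q' hq'
  have hpp' := hΓ.dist_projPt_le_of_projPt_center_mem hgeo hΓc hσΓ hw hwσ hdisjΓ hx hp hp'
  have hqq' := hΓ.dist_projPt_le_of_projPt_center_mem hgeo hΓc hσΓ hw hwσ hdisjΓ hy hq hq'
  calc dist p q ≤ dist p p' + dist p' q' + dist q' q := dist_triangle4 _ _ _ _
    _ ≤ D + 4 * (7 * D + 1) := by rw [dist_comm p p']; linarith [dist_nonneg (x := p') (y := q')]

/-- let `γ : [a,b] → X` be a `D`-contracting geodesic,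
`δ = 7D + 1`, and `σ = γ|[s,t]` a subsegment. If `z ∈ X` has a projection to
`im γ` meeting `im σ`, and `B` is a closed ball centered at `z` disjoint from
`im σ`, then `diam (π_{im σ}(B)) ≤ D + 4δ`. -/
theorem proj_diam_of_meeting_subsegment {X : Type} [MetricSpace X]
    [ProperSpace X] (hgeo : GeodesicSpace X) (D : ℝ) (hD : 0 ≤ D)
    (γ : ℝ → X) (a b : ℝ) (hab : a ≤ b)
    (hγ : IsGeodesicOn γ a b) (hcon : ContractingOn γ a b D)
    (s t : ℝ) (has : a ≤ s) (hst : s ≤ t) (htb : t ≤ b)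
    (z : X) (hz : (projPt (γ '' Set.Icc a b) z ∩ γ '' Set.Icc s t).Nonempty)
    (r : ℝ) (hdisj : Disjoint (Metric.closedBall z r) (γ '' Set.Icc s t)) :
    ∀ x ∈ Metric.closedBall z r, ∀ y ∈ Metric.closedBall z r,
      ∀ p ∈ projPt (γ '' Set.Icc s t) x, ∀ q ∈ projPt (γ '' Set.Icc s t) y,
        dist p q ≤ D + 4 * (7 * D + 1) :=
  proj_diam_of_meeting_subsegment_general hgeo D γ a b hγ hcon s t has htb z hz r hdisj
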